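/- arXiv:2202.05933 — 2 statements merged into one kernel-verified Lean document; each statement's English description precedes it below -/
import Mathlib

section
/- Flow-in containment in facets: Let E ⊆ ℤ^d be an iteration space, tile sizes t_1,…,t_d ∈ ℕ*, and dependence vectors B_1,…,B_p ∈ ℤ^d with B_j·e_q ≤ 0 for all j, q, and each B_j ≠ 0. Define facet widths w_k = max_j |B_j·e_k|, and for a tile T' the k-th facet S_k(T') = { x ∈ T' : x_k mod t_k ≥ t_k - w_k }. Then for any tile T, every point y of the flow-in set φ(T) = { y ∈ E \ T : ∃ j, y - B_j ∈ T } belongs to S_q(T') for some coordinate q and the tile T' containing y. -/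
/-- flow-in containment in facets. Every point `y` of the flow-in set of a tile
`T` (tile coordinates `i`) lies, for some coordinate `q`, in the `q`-th facet of the tile `T'`
containing `y`, i.e. `y q mod t q ≥ t q - w q` where `w q = max_j |B j q|`. -/
theorem stmt3 (d p : ℕ) (hp : 0 < p) (t : Fin d → ℤ) (ht : ∀ q, 1 ≤ t q)
    (B : Fin p → Fin d → ℤ)
    (hB : ∀ j q, B j q ≤ 0) (hB0 : ∀ j, B j ≠ 0)
    (w : Fin d → ℤ)
    (hw : ∀ q, w q = Finset.univ.sup' ⟨⟨0, hp⟩, Finset.mem_univ _⟩ fun j => |B j q|)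
    (E : Set (Fin d → ℤ)) (i y : Fin d → ℤ)
    (hyE : y ∈ E)
    (hyT : ¬ ∀ q, y q / t q = i q)
    (hflow : ∃ j, ∀ q, (y q - B j q) / t q = i q) :
    ∃ q, y ∈ {x : Fin d → ℤ | (∀ r, x r / t r = y r / t r) ∧ t q - w q ≤ x q % t q} := by
  obtain ⟨j, hj⟩ := hflow
  push_neg at hyT
  obtain ⟨q, hq⟩ := hyT
  refine ⟨q, fun r => rfl, ?_⟩
  have hb := hB j q
  have hwq : -B j q ≤ w q := by
    rw [hw q]
    have h := Finset.le_sup' (fun j => |B j q|) (Finset.mem_univ j)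
    have : |B j q| = -B j q := abs_of_nonpos hb
    omega
  have hTpos : 0 < t q := ht q
  have hdiv : y q / t q < (y q - B j q) / t q := by
    have hmono : y q / t q ≤ (y q - B j q) / t q :=
      Int.ediv_le_ediv hTpos (by omega)
    rw [hj q] at hmono ⊢
    omega
  have h1 := Int.mul_ediv_add_emod (y q) (t q)
  have h2 := Int.mul_ediv_add_emod (y q - B j q) (t q)
  have h3 := Int.emod_nonneg (y q - B j q) (by omega : t q ≠ 0)
  have h4 := Int.emod_nonneg (y q) (by omega : t q ≠ 0)
  nlinarith [hdiv]
end

section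
/- The flow-in set φ(T) of a tile T (over iteration space ℤ^d) under backward dependence vectors with facet widths w_q is contained in the union over q of the 'slabs' { y : i_q·t_q - w_q ≤ y_q < i_q·t_q } extended over the lower neighbors; consequently |φ(T)| ≤ Σ_q w_q · ∏_{r ≠ q} (t_r + w_r). -/
/-- The flow-in set of the tile `∏ q [i q * t q, (i q + 1) * t q)`. -/
def flowInBox (d p : ℕ) (t : Fin d → ℤ) (B : Fin p → Fin d → ℤ) (i : Fin d → ℤ) :
    Set (Fin d → ℤ) :=
  {y | (¬ ∀ q, i q * t q ≤ y q ∧ y q < (i q + 1) * t q) ∧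
    ∃ j, ∀ q, i q * t q ≤ y q - B j q ∧ y q - B j q < (i q + 1) * t q}

/-- the flow-in set of a tile is contained in the union over `q` of the slabs
`{y : i q * t q - w q ≤ y q < i q * t q}` extended over the lower neighbors, hence its
cardinality is at most `Σ_q w q · ∏_{r ≠ q} (t r + w r)`. -/
theorem stmt19 (d p : ℕ) (hp : 0 < p) (t : Fin d → ℤ) (ht : ∀ q, 1 ≤ t q)
    (B : Fin p → Fin d → ℤ) (hB : ∀ j q, B j q ≤ 0)
    (w : Fin d → ℤ)
    (hw : ∀ q, w q = Finset.univ.sup' ⟨⟨0, hp⟩, Finset.mem_univ _⟩ fun j => |B j q|)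
    (i : Fin d → ℤ) :
    (flowInBox d p t B i ⊆
      ⋃ q, {y : Fin d → ℤ | i q * t q - w q ≤ y q ∧ y q < i q * t q ∧
        ∀ r, i r * t r - w r ≤ y r ∧ y r < (i r + 1) * t r}) ∧
    ((flowInBox d p t B i).ncard : ℤ) ≤
      ∑ q, w q * ∏ r ∈ Finset.univ.erase q, (t r + w r) := by
  have hw0 : ∀ q, 0 ≤ w q := by
    intro q; rw [hw q]
    exact le_trans (abs_nonneg (B ⟨0, hp⟩ q))
      (Finset.le_sup' (fun j => |B j q|) (Finset.mem_univ ⟨0, hp⟩))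
  have hBw : ∀ j q, |B j q| ≤ w q := by
    intro j q; rw [hw q]
    exact Finset.le_sup' (fun j => |B j q|) (Finset.mem_univ j)
  have hsub : flowInBox d p t B i ⊆
      ⋃ q, {y : Fin d → ℤ | i q * t q - w q ≤ y q ∧ y q < i q * t q ∧
        ∀ r, i r * t r - w r ≤ y r ∧ y r < (i r + 1) * t r} := by
    rintro y ⟨hnot, j, hj⟩
    have hall : ∀ r, i r * t r - w r ≤ y r ∧ y r < (i r + 1) * t r := by
      intro r
      have h1 := (hj r).1
      have h2 := (hj r).2
      have hb := hB j r
      have habs : -B j r ≤ w r := by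
        have := hBw j r; rwa [abs_of_nonpos hb] at this
      constructor <;> linarith
    push_neg at hnot
    obtain ⟨q, hq⟩ := hnot
    have hyq : y q < i q * t q := by
      by_contra h
      push_neg at h
      have := hq h
      linarith [(hall q).2]
    exact Set.mem_iUnion.2 ⟨q, ⟨(hall q).1, hyq, hall⟩⟩
  refine ⟨hsub, ?_⟩
  set F : Fin d → Finset (Fin d → ℤ) := fun q =>
    Fintype.piFinset (fun r => Finset.Ico (i r * t r - w r)
      (if r = q then i q * t q else (i r + 1) * t r)) with hF
  have hslab : ∀ q, {y : Fin d → ℤ | i q * t q - w q ≤ y q ∧ y q < i q * t q ∧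
      ∀ r, i r * t r - w r ≤ y r ∧ y r < (i r + 1) * t r} ⊆ ↑(F q) := by
    rintro q y ⟨h1, h2, h3⟩
    simp only [hF, Finset.coe_sort_coe, Finset.mem_coe, Fintype.mem_piFinset,
      Finset.mem_Ico]
    intro r
    by_cases hr : r = q
    · subst hr; simp [h1, h2]
    · simp [hr, h3 r]
  have hsub2 : flowInBox d p t B i ⊆ ↑(Finset.univ.biUnion F) := by
    intro y hy
    obtain ⟨q, hq⟩ := Set.mem_iUnion.1 (hsub hy)
    exact Finset.mem_coe.2 (Finset.mem_biUnion.2 ⟨q, Finset.mem_univ q, hslab q hq⟩)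
  have hfin : (flowInBox d p t B i).Finite :=
    Set.Finite.subset (Finset.finite_toSet _) hsub2
  have hcard1 : (flowInBox d p t B i).ncard ≤ (Finset.univ.biUnion F).card := by
    have := Set.ncard_le_ncard hsub2 (Finset.finite_toSet _)
    rwa [Set.ncard_coe_finset] at this
  have hcard2 : (Finset.univ.biUnion F).card ≤ ∑ q, (F q).card :=
    Finset.card_biUnion_le
  have hFcard : ∀ q, ((F q).card : ℤ) =
      w q * ∏ r ∈ Finset.univ.erase q, (t r + w r) := by
    intro q
    have : (F q).card = ∏ r, ((if r = q then i q * t q else (i r + 1) * t r)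
        - (i r * t r - w r)).toNat := by
      rw [hF]
      rw [Fintype.card_piFinset]
      congr 1
      funext r
      exact Int.card_Ico _ _
    rw [this]
    push_cast
    have hnn : ∀ r : Fin d, (0:ℤ) ≤ (if r = q then i q * t q else (i r + 1) * t r)
        - (i r * t r - w r) := by
      intro r
      by_cases hr : r = q
      · subst hr; simp; linarith [hw0 r]
      · simp only [hr, if_false]; nlinarith [ht r, hw0 r]
    rw [Finset.prod_congr rfl (fun r _ => Int.toNat_of_nonneg (hnn r))]
    have h1 : ∀ r ∈ Finset.univ.erase q,
        (if r = q then i q * t q else (i r + 1) * t r) - (i r * t r - w r)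
          = t r + w r := by
      intro r hr
      have hrq : r ≠ q := Finset.ne_of_mem_erase hr
      simp only [hrq, if_false]; ring
    rw [← Finset.mul_prod_erase Finset.univ _ (Finset.mem_univ q),
      Finset.prod_congr rfl h1, if_pos rfl]
    ring
  calc ((flowInBox d p t B i).ncard : ℤ) ≤ ((Finset.univ.biUnion F).card : ℤ) := by
        exact_mod_cast hcard1
    _ ≤ ∑ q, ((F q).card : ℤ) := by exact_mod_cast hcard2
    _ = ∑ q, w q * ∏ r ∈ Finset.univ.erase q, (t r + w r) :=
        Finset.sum_congr rfl (fun q _ => hFcard q)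
end
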